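/- Coverage of the Pooling CDFs method, lower bound: Suppose the groups Z̃_1,…,Z̃_{K+1} satisfy hierarchical exchangeability, a measurable score function s is fitted on training groups Z̃_1,…,Z̃_{K₀}, the Pooling CDFs prediction set is Ĉ(x) = {y : s(x,y) ≤ T} with T = inf{t : (1/K₁) Σ_{k=K₀+1}^{K} (1/N_k) Σ_{i=1}^{N_k} 1{s(Z_{k,i}) ≤ t} ≥ 1−α} (K₁ = K − K₀), and the test point is (X_test, Y_test) = Z_{K+1,1}. Then P(Y_test ∈ Ĉ(X_test)) ≥ 1 − α − (1−α)/(K₁+1). -/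

import Mathlib

open MeasureTheory ProbabilityTheory
open scoped ENNReal

noncomputable section

/-- Extend a permutation of `Fin m` to `ℕ` by the identity outside `{0, …, m-1}`. -/
def permExt {m : ℕ} (σ : Equiv.Perm (Fin m)) : ℕ → ℕ :=
  fun i => if h : i < m then (σ ⟨i, h⟩ : ℕ) else i

/-- The representation of the groups `0, …, L-1` of a hierarchical data set:
group `k` is recorded as the pair of its size `N k ω` and its sequence of observations. -/
def hierData {Ω 𝒵 : Type*} (L : ℕ) (N : ℕ → Ω → ℕ) (Z : ℕ → ℕ → Ω → 𝒵) :
    Ω → Fin L → ℕ × (ℕ → 𝒵) :=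
  fun ω k => (N k.1 ω, fun i => Z k.1 i ω)

/-- Hierarchical exchangeability (Definition 1.1) of the groups `0, …, L-1`:
(i) the groups are exchangeable with each other, and (ii) for each `k` and each `m`
with `P(N_k = m) > 0`, conditionally on `N_k = m` the first `m` observations within
group `k` are exchangeable. -/
def HierExch {Ω 𝒵 : Type*} [MeasurableSpace Ω] [MeasurableSpace 𝒵] (L : ℕ)
    (P : Measure Ω) (N : ℕ → Ω → ℕ) (Z : ℕ → ℕ → Ω → 𝒵) : Prop :=
  (∀ σ : Equiv.Perm (Fin L),
      Measure.map (fun ω => fun k : Fin L => hierData L N Z ω (σ k)) P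
        = Measure.map (hierData L N Z) P) ∧
  (∀ k, k < L → ∀ m : ℕ, 0 < P {ω | N k ω = m} → ∀ σ : Equiv.Perm (Fin m),
      Measure.map
          (hierData L N fun k' i => if k' = k then Z k' (permExt σ i) else Z k' i)
          (ProbabilityTheory.cond P {ω | N k ω = m})
        = Measure.map (hierData L N Z) (ProbabilityTheory.cond P {ω | N k ω = m}))

/-- The `(1-β)`-quantile `Q_{1-β}(μ) = inf {t : μ((-∞, t]) ≥ 1-β}` of a distribution `μ`
on the extended real line. -/
def erealQuantile (β : ℝ) (μ : Measure EReal) : EReal :=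
  sInf {t : EReal | ENNReal.ofReal β ≤ μ (Set.Iic t)}

/-- The Pooling-CDFs threshold: the `(1-α)`-quantile of the pooled empirical distribution
`Σ_{k=K₀}^{K-1} Σ_{i<n k} (1/(K₁·(n k))) δ_{sc k i}`, where `K₁ = K - K₀`. -/
def poolThreshold (α : ℝ) (K₀ K : ℕ) (n : ℕ → ℕ) (sc : ℕ → ℕ → ℝ) : EReal :=
  erealQuantile (1 - α)
    (∑ k ∈ Finset.Ico K₀ K, ∑ i ∈ Finset.range (n k),
      (((K - K₀ : ℕ) : ℝ≥0∞) * (n k : ℝ≥0∞))⁻¹ • Measure.dirac ((sc k i : EReal)))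

/-!
Let `T` be the calibration quantile and `T'` the `(1-α)K₁/(K₁+1)`-quantile of the pooled CDF of
the `K₁ + 1` calibration and test groups. Adding the test group keeps at least the fraction
`K₁/(K₁+1)` of the pooled mass below every level, so `T' ≤ T`. Given its size, the test group is
exchangeable and `T` ignores it, so `P(s_test ≤ T) = E[F_test(T)]`, the expected empirical CDF of
the test group at `T`. The calibration and test groups are exchangeable and `T'` is symmetric in
them, so `E[F_test(T')]` is the average of the `E[F_k(T')]`, i.e. the expected pooled CDF at its own
quantile `T'`, which is at least `(1-α)K₁/(K₁+1)`.
-/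

open Set

theorem biInter_gt_Iic_eq {α : Type*} [LinearOrder α] [DenselyOrdered α] (a : α) :
    ⋂ r > a, Iic r = Iic a := by
  ext x
  simp only [mem_iInter, mem_Iic]
  exact ⟨le_of_forall_gt_imp_ge_of_dense, fun hx r hr => hx.trans hr.le⟩

section Quantile

variable {μ : Measure EReal} [IsFiniteMeasure μ] {β : ℝ}

/-- `t ↦ μ (Iic t)` is right-continuous, so the infimum defining the quantile is attained. -/
theorem le_measure_Iic_erealQuantile (hβ : ENNReal.ofReal β ≤ μ univ) :
    ENNReal.ofReal β ≤ μ (Iic (erealQuantile β μ)) := by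
  set q := erealQuantile β μ
  rcases eq_or_ne q ⊤ with hq | hq
  · rwa [hq, Iic_top]
  have hgt : ∀ r > q, ENNReal.ofReal β ≤ μ (Iic r) := fun r hr => by
    obtain ⟨t, ht, htr⟩ := sInf_lt_iff.1 hr
    exact ht.trans (measure_mono (Iic_subset_Iic.2 htr.le))
  have hlim := tendsto_measure_biInter_gt (μ := μ) (s := Iic) (a := q)
    (fun r _ => measurableSet_Iic.nullMeasurableSet) (fun _ _ _ hij => Iic_subset_Iic.2 hij)
    ⟨⊤, lt_top_iff_ne_top.2 hq, measure_ne_top _ _⟩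
  rw [biInter_gt_Iic_eq] at hlim
  have : Filter.NeBot (nhdsWithin q (Ioi q)) :=
    nhdsGT_neBot_of_exists_gt ⟨⊤, lt_top_iff_ne_top.2 hq⟩
  exact ge_of_tendsto hlim (eventually_nhdsWithin_of_forall hgt)

theorem erealQuantile_le_iff {c : EReal} (hc : c ≠ ⊤) :
    erealQuantile β μ ≤ c ↔ ENNReal.ofReal β ≤ μ (Iic c) := by
  refine ⟨fun h => ?_, fun h => sInf_le h⟩
  have hβ : ENNReal.ofReal β ≤ μ univ := by
    by_contra hlt
    have hS : {t | ENNReal.ofReal β ≤ μ (Iic t)} = ∅ :=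
      eq_empty_of_forall_notMem fun t ht => hlt (ht.trans (measure_mono (subset_univ _)))
    rw [erealQuantile, hS, sInf_empty, top_le_iff] at h
    exact hc h
  exact (le_measure_Iic_erealQuantile hβ).trans (measure_mono (Iic_subset_Iic.2 h))

end Quantile

theorem Measurable.erealQuantile {X : Type*} [MeasurableSpace X] {ν : X → Measure EReal}
    [∀ x, IsFiniteMeasure (ν x)] (hν : ∀ t, Measurable fun x => ν x (Iic t)) (β : ℝ) :
    Measurable fun x => erealQuantile β (ν x) := by
  refine measurable_of_Iic fun c => ?_
  rcases eq_or_ne c ⊤ with rfl | hc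
  · simp only [Iic_top, preimage_univ, MeasurableSet.univ]
  · have : (fun x => _root_.erealQuantile β (ν x)) ⁻¹' Iic c
        = {x | ENNReal.ofReal β ≤ ν x (Iic c)} := by
      ext x
      exact erealQuantile_le_iff hc
    rw [this]
    exact measurableSet_le measurable_const (hν c)

section Empirical

variable {α : Type*} [MeasurableSpace α]

def empiricalMeasure (n : ℕ) (x : ℕ → α) : Measure α :=
  (n : ℝ≥0∞)⁻¹ • ∑ i ∈ Finset.range n, Measure.dirac (x i)

theorem empiricalMeasure_apply (n : ℕ) (x : ℕ → α) {s : Set α} (hs : MeasurableSet s) :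
    empiricalMeasure n x s = (n : ℝ≥0∞)⁻¹ * ∑ i ∈ Finset.range n, s.indicator 1 (x i) := by
  simp only [empiricalMeasure, Measure.smul_apply, Measure.coe_finsetSum, Finset.sum_apply,
    Measure.dirac_apply' _ hs, smul_eq_mul]

theorem empiricalMeasure_univ (n : ℕ) (x : ℕ → α) :
    empiricalMeasure n x univ = (n : ℝ≥0∞)⁻¹ * n := by
  simp [empiricalMeasure_apply n x MeasurableSet.univ]

instance (n : ℕ) (x : ℕ → α) : IsFiniteMeasure (empiricalMeasure n x) :=
  ⟨by
    rw [empiricalMeasure_univ]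
    rcases eq_or_ne n 0 with rfl | hn
    · simp
    · exact ENNReal.mul_lt_top (ENNReal.inv_lt_top.2 (by positivity)) (by simp)⟩

theorem Measurable.empiricalMeasure_apply_Iic [TopologicalSpace α] [LinearOrder α]
    [OrderClosedTopology α] [SecondCountableTopology α] [OpensMeasurableSpace α]
    {X : Type*} [MeasurableSpace X] {n : X → ℕ} {x : X → ℕ → α} {c : X → α}
    (hn : Measurable n) (hx : ∀ i, Measurable fun w => x w i) (hc : Measurable c) :
    Measurable fun w => empiricalMeasure (n w) (x w) (Iic (c w)) := by
  have hF : Measurable fun p : X × ℕ => (p.2 : ℝ≥0∞)⁻¹ *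
      ∑ i ∈ Finset.range p.2, (Iic (c p.1)).indicator 1 (x p.1 i) := by
    refine measurable_from_prod_countable_left fun m => ?_
    dsimp only
    refine Measurable.const_mul ?_ _
    refine Finset.measurable_sum _ fun i _ => ?_
    simp only [indicator_apply, mem_Iic, Pi.one_apply]
    exact Measurable.ite (measurableSet_le (hx i) hc) measurable_const measurable_const
  have h : ∀ w, empiricalMeasure (n w) (x w) (Iic (c w))
      = (n w : ℝ≥0∞)⁻¹ * ∑ i ∈ Finset.range (n w), (Iic (c w)).indicator 1 (x w i) :=
    fun w => empiricalMeasure_apply _ _ measurableSet_Iic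
  simp only [h]
  exact hF.comp (f := fun w => (w, n w)) (measurable_id.prodMk hn)

def pooledMeasure (K₀ K : ℕ) (n : ℕ → ℕ) (x : ℕ → ℕ → α) : Measure α :=
  ((K - K₀ : ℕ) : ℝ≥0∞)⁻¹ • ∑ k ∈ Finset.Ico K₀ K, empiricalMeasure (n k) (x k)

theorem pooledMeasure_apply (K₀ K : ℕ) (n : ℕ → ℕ) (x : ℕ → ℕ → α) (s : Set α) :
    pooledMeasure K₀ K n x s
      = ((K - K₀ : ℕ) : ℝ≥0∞)⁻¹ * ∑ k ∈ Finset.Ico K₀ K, empiricalMeasure (n k) (x k) s := by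
  simp only [pooledMeasure, Measure.smul_apply, Measure.coe_finsetSum, Finset.sum_apply,
    smul_eq_mul]

instance (K₀ K : ℕ) (n : ℕ → ℕ) (x : ℕ → ℕ → α) : IsFiniteMeasure (pooledMeasure K₀ K n x) :=
  ⟨by
    rw [pooledMeasure_apply]
    rcases lt_or_ge K₀ K with hK | hK
    · exact ENNReal.mul_lt_top (ENNReal.inv_lt_top.2 (by simpa using hK))
        (ENNReal.sum_lt_top.2 fun k _ => measure_lt_top _ _)
    · simp [Finset.Ico_eq_empty_of_le hK]⟩

theorem pooledMeasure_univ {K₀ K : ℕ} (hK : K₀ < K) {n : ℕ → ℕ}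
    (hn : ∀ k ∈ Finset.Ico K₀ K, n k ≠ 0) (x : ℕ → ℕ → α) :
    pooledMeasure K₀ K n x univ = 1 := by
  rw [pooledMeasure_apply, Finset.sum_congr rfl fun k hk => by
    rw [empiricalMeasure_univ, ENNReal.inv_mul_cancel (by simpa using hn k hk) (by simp)]]
  rw [Finset.sum_const, Nat.card_Ico, nsmul_eq_mul, mul_one,
    ENNReal.inv_mul_cancel (Nat.cast_ne_zero.2 (by omega)) (by simp)]

theorem pooledMeasure_congr {K₀ K : ℕ} {n n' : ℕ → ℕ} {x x' : ℕ → ℕ → α}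
    (hn : ∀ k ∈ Finset.Ico K₀ K, n k = n' k) (hx : ∀ k ∈ Finset.Ico K₀ K, x k = x' k) :
    pooledMeasure K₀ K n x = pooledMeasure K₀ K n' x' := by
  unfold pooledMeasure
  congr 1
  exact Finset.sum_congr rfl fun k hk => by rw [hn k hk, hx k hk]

theorem pooledMeasure_comp_swap {K₀ K : ℕ} {a b : ℕ} (ha : a ∈ Finset.Ico K₀ K)
    (hb : b ∈ Finset.Ico K₀ K) (n : ℕ → ℕ) (x : ℕ → ℕ → α) :
    pooledMeasure K₀ K (fun k => n (Equiv.swap a b k)) (fun k => x (Equiv.swap a b k))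
      = pooledMeasure K₀ K n x := by
  unfold pooledMeasure
  congr 1
  refine Equiv.Perm.sum_comp _ _ (fun k => empiricalMeasure (n k) (x k)) fun k hk => ?_
  rcases (Equiv.swap_apply_ne_self_iff.1 hk).2 with rfl | rfl <;> assumption

theorem natCast_mul_pooledMeasure_apply {K₀ K : ℕ} (hK : K₀ < K) (n : ℕ → ℕ)
    (x : ℕ → ℕ → α) (s : Set α) :
    ((K - K₀ : ℕ) : ℝ≥0∞) * pooledMeasure K₀ K n x s
      = ∑ k ∈ Finset.Ico K₀ K, empiricalMeasure (n k) (x k) s := by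
  rw [pooledMeasure_apply, ← mul_assoc,
    ENNReal.mul_inv_cancel (Nat.cast_ne_zero.2 (by omega)) (by simp), one_mul]

end Empirical

theorem poolThreshold_eq (α : ℝ) (K₀ K : ℕ) (n : ℕ → ℕ) (sc : ℕ → ℕ → ℝ) :
    poolThreshold α K₀ K n sc
      = erealQuantile (1 - α) (pooledMeasure K₀ K n fun k i => (sc k i : EReal)) := by
  unfold poolThreshold pooledMeasure empiricalMeasure
  congr 1
  simp only [Finset.smul_sum, smul_smul]
  refine Finset.sum_congr rfl fun k _ => Finset.sum_congr rfl fun i _ => ?_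
  rw [ENNReal.mul_inv (Or.inr (by simp)) (Or.inl (by simp))]

/-- Adding one group keeps at least the fraction `(K - K₀)/(K - K₀ + 1)` of the pooled mass
below every level. -/
theorem erealQuantile_pooledMeasure_succ_le {K₀ K : ℕ} (hK : K₀ < K) (n : ℕ → ℕ)
    (x : ℕ → ℕ → EReal) (α : ℝ) :
    erealQuantile (1 - α - (1 - α) / (((K - K₀ : ℕ) : ℝ) + 1)) (pooledMeasure K₀ (K + 1) n x)
      ≤ erealQuantile (1 - α) (pooledMeasure K₀ K n x) := by
  refine sInf_le_sInf fun t (ht : ENNReal.ofReal (1 - α) ≤ _) => ?_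
  show ENNReal.ofReal _ ≤ _
  set d : ℕ := K - K₀
  have hd1 : K + 1 - K₀ = d + 1 := by omega
  have hlevel : ((d + 1 : ℕ) : ℝ≥0∞) * ENNReal.ofReal (1 - α - (1 - α) / ((d : ℝ) + 1))
      = d * ENNReal.ofReal (1 - α) := by
    rw [← ENNReal.ofReal_natCast, ← ENNReal.ofReal_natCast d,
      ← ENNReal.ofReal_mul (by positivity), ← ENNReal.ofReal_mul (by positivity)]
    congr 1
    push_cast
    field_simp
    ring
  rw [← ENNReal.mul_le_mul_iff_right (Nat.cast_ne_zero.2 (Nat.succ_ne_zero d))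
    (ENNReal.natCast_ne_top _), hlevel]
  calc (d : ℝ≥0∞) * ENNReal.ofReal (1 - α) ≤ d * pooledMeasure K₀ K n x (Iic t) := by gcongr
    _ = ∑ k ∈ Finset.Ico K₀ K, empiricalMeasure (n k) (x k) (Iic t) :=
      natCast_mul_pooledMeasure_apply hK n x _
    _ ≤ ∑ k ∈ Finset.Ico K₀ (K + 1), empiricalMeasure (n k) (x k) (Iic t) :=
      Finset.sum_le_sum_of_subset (Finset.Ico_subset_Ico_right K.le_succ)
    _ = ((d + 1 : ℕ) : ℝ≥0∞) * pooledMeasure K₀ (K + 1) n x (Iic t) := by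
      rw [← hd1, natCast_mul_pooledMeasure_apply (by omega)]

theorem permExt_swap {m : ℕ} (a b : Fin m) : permExt (Equiv.swap a b) = Equiv.swap (a : ℕ) b := by
  funext k
  unfold permExt
  split_ifs with hk
  · exact (Fin.val_injective.swap_apply a b ⟨k, hk⟩).symm
  · exact (Equiv.swap_apply_of_ne_of_ne (by omega) (by omega)).symm

section Sample

variable {𝒵 : Type*}

def groupSize {L : ℕ} (w : Fin L → ℕ × (ℕ → 𝒵)) (k : ℕ) : ℕ :=
  if h : k < L then (w ⟨k, h⟩).1 else 0

def permuteWithin {L m : ℕ} (k : ℕ) (σ : Equiv.Perm (Fin m)) (w : Fin L → ℕ × (ℕ → 𝒵)) :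
    Fin L → ℕ × (ℕ → 𝒵) :=
  fun j => ((w j).1, fun i => if (j : ℕ) = k then (w j).2 (permExt σ i) else (w j).2 i)

theorem groupSize_permuteWithin {L m : ℕ} (k : ℕ) (σ : Equiv.Perm (Fin m))
    (w : Fin L → ℕ × (ℕ → 𝒵)) : groupSize (permuteWithin k σ w) = groupSize w := by
  funext j
  unfold groupSize permuteWithin
  split_ifs <;> rfl

theorem groupSize_comp {L : ℕ} (σ : Equiv.Perm (Fin L)) (w : Fin L → ℕ × (ℕ → 𝒵)) (k : ℕ) :
    groupSize (fun j => w (σ j)) k = groupSize w (permExt σ k) := by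
  by_cases hk : k < L <;> simp [groupSize, permExt, hk]

variable {K K₀ : ℕ}

def trainingGroups (w : Fin (K + 1) → ℕ × (ℕ → 𝒵)) : Fin K₀ → ℕ × (ℕ → 𝒵) :=
  fun j => if h : (j : ℕ) < K + 1 then w ⟨j, h⟩ else w 0

def score (A : (Fin K₀ → ℕ × (ℕ → 𝒵)) → 𝒵 → ℝ) (w : Fin (K + 1) → ℕ × (ℕ → 𝒵))
    (k i : ℕ) : EReal :=
  if h : k < K + 1 then (A (trainingGroups w) ((w ⟨k, h⟩).2 i) : EReal) else 0

def poolQuantile (β : ℝ) (M : ℕ) (A : (Fin K₀ → ℕ × (ℕ → 𝒵)) → 𝒵 → ℝ)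
    (w : Fin (K + 1) → ℕ × (ℕ → 𝒵)) : EReal :=
  erealQuantile β (pooledMeasure K₀ M (groupSize w) (score A w))

def groupCDF (A : (Fin K₀ → ℕ × (ℕ → 𝒵)) → 𝒵 → ℝ) (k : ℕ) (t : EReal)
    (w : Fin (K + 1) → ℕ × (ℕ → 𝒵)) : ℝ≥0∞ :=
  empiricalMeasure (groupSize w k) (score A w k) (Iic t)

variable (A : (Fin K₀ → ℕ × (ℕ → 𝒵)) → 𝒵 → ℝ)

theorem groupCDF_mono (k : ℕ) {t t' : EReal} (h : t ≤ t') (w : Fin (K + 1) → ℕ × (ℕ → 𝒵)) :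
    groupCDF A k t w ≤ groupCDF A k t' w :=
  measure_mono (Iic_subset_Iic.2 h)

theorem trainingGroups_permuteWithin {m k : ℕ} (hk : K₀ ≤ k) (σ : Equiv.Perm (Fin m))
    (w : Fin (K + 1) → ℕ × (ℕ → 𝒵)) :
    trainingGroups (K₀ := K₀) (permuteWithin k σ w) = trainingGroups w := by
  funext j
  have hj : (j : ℕ) ≠ k := by omega
  unfold trainingGroups
  split_ifs with h
  · simp [permuteWithin, hj]
  · have h0 : (0 : ℕ) ≠ k := by omega
    simp [permuteWithin, h0]

theorem score_permuteWithin_of_ne {m k j : ℕ} (hk : K₀ ≤ k) (hj : j ≠ k)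
    (σ : Equiv.Perm (Fin m)) (w : Fin (K + 1) → ℕ × (ℕ → 𝒵)) (i : ℕ) :
    score A (permuteWithin k σ w) j i = score A w j i := by
  unfold score
  split_ifs with h
  · rw [trainingGroups_permuteWithin hk]
    simp [permuteWithin, hj]
  · rfl

theorem score_permuteWithin_self {m k : ℕ} (hk : K₀ ≤ k) (σ : Equiv.Perm (Fin m))
    (w : Fin (K + 1) → ℕ × (ℕ → 𝒵)) (i : ℕ) :
    score A (permuteWithin k σ w) k i = score A w k (permExt σ i) := by
  unfold score
  split_ifs with h
  · rw [trainingGroups_permuteWithin hk]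
    simp [permuteWithin]
  · rfl

theorem poolQuantile_permuteWithin {m k M : ℕ} (hk : K₀ ≤ k) (hM : M ≤ k) (β : ℝ)
    (σ : Equiv.Perm (Fin m)) (w : Fin (K + 1) → ℕ × (ℕ → 𝒵)) :
    poolQuantile β M A (permuteWithin k σ w) = poolQuantile β M A w := by
  unfold poolQuantile
  rw [groupSize_permuteWithin, pooledMeasure_congr (fun _ _ => rfl) fun j hj => funext fun i =>
    score_permuteWithin_of_ne A hk (by rw [Finset.mem_Ico] at hj; omega) σ w i]

theorem trainingGroups_comp {σ : Equiv.Perm (Fin (K + 1))}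
    (hσ : ∀ j : Fin (K + 1), (j : ℕ) < K₀ → σ j = j) (w : Fin (K + 1) → ℕ × (ℕ → 𝒵)) :
    trainingGroups (K₀ := K₀) (fun j => w (σ j)) = trainingGroups w := by
  funext j
  unfold trainingGroups
  split_ifs with h
  · exact congrArg w (hσ ⟨j, h⟩ j.isLt)
  · exact congrArg w (hσ 0 (by simp; omega))

theorem score_comp {σ : Equiv.Perm (Fin (K + 1))}
    (hσ : ∀ j : Fin (K + 1), (j : ℕ) < K₀ → σ j = j) (w : Fin (K + 1) → ℕ × (ℕ → 𝒵))
    (k i : ℕ) : score A (fun j => w (σ j)) k i = score A w (permExt σ k) i := by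
  by_cases hk : k < K + 1
  · simp [score, permExt, hk, trainingGroups_comp hσ, (σ ⟨k, hk⟩).isLt]
  · simp [score, permExt, hk]

theorem swap_apply_eq_self_of_lt {a b : Fin (K + 1)} (ha : K₀ ≤ (a : ℕ)) (hb : K₀ ≤ (b : ℕ))
    (j : Fin (K + 1)) (hj : (j : ℕ) < K₀) : Equiv.swap a b j = j :=
  Equiv.swap_apply_of_ne_of_ne (Fin.ne_of_val_ne (by omega)) (Fin.ne_of_val_ne (by omega))

theorem groupCDF_comp_swap {a b : Fin (K + 1)} (ha : K₀ ≤ (a : ℕ)) (hb : K₀ ≤ (b : ℕ))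
    (k : ℕ) (t : EReal) (w : Fin (K + 1) → ℕ × (ℕ → 𝒵)) :
    groupCDF A k t (fun j => w (Equiv.swap a b j)) = groupCDF A (Equiv.swap (a : ℕ) b k) t w := by
  unfold groupCDF
  rw [groupSize_comp, permExt_swap]
  congr 2
  funext i
  rw [score_comp A (swap_apply_eq_self_of_lt ha hb), permExt_swap]

theorem poolQuantile_comp_swap {a b : Fin (K + 1)} (ha : K₀ ≤ (a : ℕ)) (hb : K₀ ≤ (b : ℕ))
    (β : ℝ) (w : Fin (K + 1) → ℕ × (ℕ → 𝒵)) :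
    poolQuantile β (K + 1) A (fun j => w (Equiv.swap a b j)) = poolQuantile β (K + 1) A w := by
  unfold poolQuantile
  simp only [funext (groupSize_comp _ w), funext₂ (score_comp A (swap_apply_eq_self_of_lt ha hb) w),
    permExt_swap]
  rw [pooledMeasure_comp_swap (by simp; omega) (by simp; omega)]

end Sample

section Measurability

variable {𝒵 : Type*} [MeasurableSpace 𝒵]

theorem measurable_groupSize {L : ℕ} (k : ℕ) :
    Measurable fun w : Fin L → ℕ × (ℕ → 𝒵) => groupSize w k := by
  unfold groupSize
  split_ifs
  exacts [measurable_fst.comp (measurable_pi_apply _), measurable_const]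

theorem measurableSet_groupSize_eq {L : ℕ} (k m : ℕ) :
    MeasurableSet {w : Fin L → ℕ × (ℕ → 𝒵) | groupSize w k = m} :=
  measurable_groupSize k (measurableSet_singleton m)

theorem measurable_permuteWithin {L m : ℕ} (k : ℕ) (σ : Equiv.Perm (Fin m)) :
    Measurable (permuteWithin (L := L) (𝒵 := 𝒵) k σ) :=
  measurable_pi_lambda _ fun j => (measurable_fst.comp (measurable_pi_apply j)).prodMk
    (measurable_pi_lambda _ fun i => by
      split_ifs <;>
        exact (measurable_pi_apply _).comp (measurable_snd.comp (measurable_pi_apply j)))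

variable {K K₀ : ℕ}

theorem measurable_trainingGroups :
    Measurable (trainingGroups (K := K) (K₀ := K₀) (𝒵 := 𝒵)) :=
  measurable_pi_lambda _ fun j => by
    unfold trainingGroups
    split_ifs <;> exact measurable_pi_apply _

variable {A : (Fin K₀ → ℕ × (ℕ → 𝒵)) → 𝒵 → ℝ}
  (hA : Measurable fun p : (Fin K₀ → ℕ × (ℕ → 𝒵)) × 𝒵 => A p.1 p.2)
include hA

theorem measurable_score (k i : ℕ) :
    Measurable fun w : Fin (K + 1) → ℕ × (ℕ → 𝒵) => score A w k i := by
  unfold score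
  split_ifs
  · exact (hA.comp (measurable_trainingGroups.prodMk ((measurable_pi_apply i).comp
      (measurable_snd.comp (measurable_pi_apply _))))).coe_real_ereal
  · exact measurable_const

theorem measurable_groupCDF {c : (Fin (K + 1) → ℕ × (ℕ → 𝒵)) → EReal} (hc : Measurable c)
    (k : ℕ) : Measurable fun w => groupCDF A k (c w) w :=
  Measurable.empiricalMeasure_apply_Iic (measurable_groupSize k) (measurable_score hA k) hc

theorem measurable_poolQuantile (β : ℝ) (M : ℕ) :
    Measurable (poolQuantile (K := K) β M A) :=
  Measurable.erealQuantile (fun t => by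
    simp_rw [pooledMeasure_apply]
    exact (Finset.measurable_sum _ fun k _ =>
      measurable_groupCDF hA measurable_const k).const_mul _)
    β

end Measurability

theorem lintegral_eq_lintegral_average {X ι : Type*} [MeasurableSpace X] {μ : Measure X}
    {s : Finset ι} (hs : s.Nonempty) {f : ι → X → ℝ≥0∞} (hf : ∀ i ∈ s, Measurable (f i))
    {j : ι} (h : ∀ i ∈ s, ∫⁻ x, f i x ∂μ = ∫⁻ x, f j x ∂μ) :
    ∫⁻ x, f j x ∂μ = ∫⁻ x, (s.card : ℝ≥0∞)⁻¹ * ∑ i ∈ s, f i x ∂μ := by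
  have hcard : (s.card : ℝ≥0∞) ≠ 0 := by simpa using hs.ne_empty
  rw [lintegral_const_mul' _ _ (ENNReal.inv_ne_top.2 hcard), lintegral_finsetSum _ hf,
    Finset.sum_congr rfl h, Finset.sum_const, nsmul_eq_mul, ← mul_assoc,
    ENNReal.inv_mul_cancel hcard (by simp), one_mul]

theorem lintegral_eq_of_forall_setLIntegral_fiber {X β : Type*} [MeasurableSpace X]
    [MeasurableSpace β] [Countable β] [MeasurableSingletonClass β] {μ : Measure X} {p : X → β}
    (hp : Measurable p) {f g : X → ℝ≥0∞}
    (h : ∀ b, ∫⁻ x in p ⁻¹' {b}, f x ∂μ = ∫⁻ x in p ⁻¹' {b}, g x ∂μ) :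
    ∫⁻ x, f x ∂μ = ∫⁻ x, g x ∂μ := by
  have hμ : μ = Measure.sum fun b => μ.restrict (p ⁻¹' {b}) := by
    rw [← Measure.restrict_iUnion (fun b b' hb => (disjoint_singleton.2 hb).preimage p)
      fun b => hp (measurableSet_singleton b), ← preimage_iUnion, iUnion_of_singleton,
      preimage_univ, Measure.restrict_univ]
  rw [hμ, lintegral_sum_measure, lintegral_sum_measure]
  exact tsum_congr h

section Exchangeable

variable {𝒵 : Type*} [MeasurableSpace 𝒵] {K K₀ : ℕ} {A : (Fin K₀ → ℕ × (ℕ → 𝒵)) → 𝒵 → ℝ}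
  {μ : Measure (Fin (K + 1) → ℕ × (ℕ → 𝒵))}

/-- Given its size `m`, relabelling group `k` preserves the law and does not move `τ`, so the
`m` events `score A w k i ≤ τ w` are equally likely. -/
theorem measure_score_le_eq_lintegral_groupCDF
    (hA : Measurable fun p : (Fin K₀ → ℕ × (ℕ → 𝒵)) × 𝒵 => A p.1 p.2) {k : ℕ} (hk : K₀ ≤ k)
    (hμ : ∀ m (σ : Equiv.Perm (Fin m)), MeasurePreserving (permuteWithin k σ)
      (μ.restrict {w | groupSize w k = m}) (μ.restrict {w | groupSize w k = m}))
    (hμ₀ : μ {w | groupSize w k = 0} = 0) {τ : (Fin (K + 1) → ℕ × (ℕ → 𝒵)) → EReal}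
    (hτ : Measurable τ) (hτσ : ∀ m (σ : Equiv.Perm (Fin m)) w, τ (permuteWithin k σ w) = τ w) :
    μ {w | score A w k 0 ≤ τ w} = ∫⁻ w, groupCDF A k (τ w) w ∂μ := by
  set B : ℕ → Set (Fin (K + 1) → ℕ × (ℕ → 𝒵)) := fun i => {w | score A w k i ≤ τ w} with hB
  have hBm : ∀ i, MeasurableSet (B i) := fun i => measurableSet_le (measurable_score hA k i) hτ
  rw [← lintegral_indicator_one (hBm 0)]
  refine lintegral_eq_of_forall_setLIntegral_fiber (measurable_groupSize k) fun m => ?_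
  change ∫⁻ w in {w | groupSize w k = m}, _ ∂μ = ∫⁻ w in {w | groupSize w k = m}, _ ∂μ
  rcases Nat.eq_zero_or_pos m with rfl | hm
  · simp [Measure.restrict_eq_zero.2 hμ₀]
  calc ∫⁻ w in {w | groupSize w k = m}, (B 0).indicator 1 w ∂μ
      = ∫⁻ w in {w | groupSize w k = m},
          ((Finset.range m).card : ℝ≥0∞)⁻¹ * ∑ i ∈ Finset.range m, (B i).indicator 1 w ∂μ := by
        refine lintegral_eq_lintegral_average (Finset.nonempty_range_iff.2 hm.ne')
          (fun i _ => measurable_one.indicator (hBm i)) fun i hi => ?_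
        rw [← (hμ m (Equiv.swap ⟨0, hm⟩ ⟨i, Finset.mem_range.1 hi⟩)).lintegral_comp
          (measurable_one.indicator (hBm 0))]
        congr 1
        funext w
        simp only [hB, indicator_apply, mem_ofPred_eq, Pi.one_apply,
          score_permuteWithin_self A hk, hτσ, permExt_swap, Equiv.swap_apply_left]
    _ = ∫⁻ w in {w | groupSize w k = m}, groupCDF A k (τ w) w ∂μ := by
        refine setLIntegral_congr_fun (measurableSet_groupSize_eq k m)
          fun w (hw : groupSize w k = m) => ?_
        simp only [groupCDF, empiricalMeasure_apply _ _ measurableSet_Iic, hw, Finset.card_range,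
          hB, indicator_apply, mem_ofPred_eq, mem_Iic, Pi.one_apply]

/-- Swapping group `k` with the test group `K` preserves the law and leaves the augmented
quantile unchanged, so the groups `K₀, …, K` all have the same expected CDF at it. -/
theorem lintegral_groupCDF_eq_lintegral_pooledMeasure
    (hA : Measurable fun p : (Fin K₀ → ℕ × (ℕ → 𝒵)) × 𝒵 => A p.1 p.2) (hK₀ : K₀ ≤ K)
    (hμ : ∀ σ : Equiv.Perm (Fin (K + 1)), MeasurePreserving (fun w j => w (σ j)) μ μ) (β : ℝ) :
    ∫⁻ w, groupCDF A K (poolQuantile β (K + 1) A w) w ∂μ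
      = ∫⁻ w, pooledMeasure K₀ (K + 1) (groupSize w) (score A w)
          (Iic (poolQuantile β (K + 1) A w)) ∂μ := by
  have hf : ∀ k, Measurable fun w : Fin (K + 1) → ℕ × (ℕ → 𝒵) =>
      groupCDF A k (poolQuantile β (K + 1) A w) w :=
    measurable_groupCDF hA (measurable_poolQuantile hA β (K + 1))
  rw [lintegral_eq_lintegral_average (s := Finset.Ico K₀ (K + 1)) (j := K)
    ⟨K, by simp; omega⟩ (fun k _ => hf k) fun k hk => ?_]
  · simp only [pooledMeasure_apply, Nat.card_Ico]
    rfl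
  · rw [Finset.mem_Ico] at hk
    rw [← (hμ (Equiv.swap ⟨k, hk.2⟩ (Fin.last K))).lintegral_comp (hf K)]
    congr 1
    funext w
    rw [poolQuantile_comp_swap A hk.1 (by simpa using hK₀),
      groupCDF_comp_swap A hk.1 (by simpa using hK₀), Fin.val_last, Equiv.swap_apply_right]

theorem le_lintegral_pooledMeasure_Iic_poolQuantile [IsProbabilityMeasure μ] (hK₀ : K₀ ≤ K)
    (hsize : ∀ k ∈ Finset.Ico K₀ (K + 1), μ {w | groupSize w k = 0} = 0) {β : ℝ} (hβ : β ≤ 1) :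
    ENNReal.ofReal β ≤ ∫⁻ w, pooledMeasure K₀ (K + 1) (groupSize w) (score A w)
      (Iic (poolQuantile β (K + 1) A w)) ∂μ := by
  have hae : ∀ᵐ w ∂μ, ∀ k ∈ Finset.Ico K₀ (K + 1), groupSize w k ≠ 0 :=
    (Filter.eventually_all_finset _).2 fun k hk => measure_eq_zero_iff_ae_notMem.1 (hsize k hk)
  calc ENNReal.ofReal β = ∫⁻ _, ENNReal.ofReal β ∂μ := by simp
    _ ≤ _ := lintegral_mono_ae (hae.mono fun w hw => le_measure_Iic_erealQuantile (by
      rw [pooledMeasure_univ (by omega) hw]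
      exact ENNReal.ofReal_le_one.2 hβ))

theorem coverage_lower_of_exchangeable [IsProbabilityMeasure μ]
    (hA : Measurable fun p : (Fin K₀ → ℕ × (ℕ → 𝒵)) × 𝒵 => A p.1 p.2) (hK₀ : K₀ < K)
    (hswap : ∀ σ : Equiv.Perm (Fin (K + 1)), MeasurePreserving (fun w j => w (σ j)) μ μ)
    (hwithin : ∀ m (σ : Equiv.Perm (Fin m)), MeasurePreserving (permuteWithin K σ)
      (μ.restrict {w | groupSize w K = m}) (μ.restrict {w | groupSize w K = m}))
    (hsize : ∀ k ∈ Finset.Ico K₀ (K + 1), μ {w | groupSize w k = 0} = 0) {α : ℝ} (hα : 0 ≤ α) :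
    ENNReal.ofReal (1 - α - (1 - α) / (((K - K₀ : ℕ) : ℝ) + 1))
      ≤ μ {w | score A w K 0 ≤ poolQuantile (1 - α) K A w} := by
  set β := 1 - α - (1 - α) / (((K - K₀ : ℕ) : ℝ) + 1)
  have hβ : β ≤ 1 := by
    have : 1 - β = (1 + α * (K - K₀ : ℕ)) / (((K - K₀ : ℕ) : ℝ) + 1) := by
      simp only [β]
      field_simp
      ring
    linarith [show 0 ≤ 1 - β by rw [this]; positivity]
  rw [measure_score_le_eq_lintegral_groupCDF hA hK₀.le hwithin (hsize K (by simp; omega))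
    (measurable_poolQuantile hA _ K) fun m σ w => poolQuantile_permuteWithin A hK₀.le le_rfl _ σ w]
  calc ENNReal.ofReal β
      ≤ ∫⁻ w, pooledMeasure K₀ (K + 1) (groupSize w) (score A w)
          (Iic (poolQuantile β (K + 1) A w)) ∂μ :=
        le_lintegral_pooledMeasure_Iic_poolQuantile hK₀.le hsize hβ
    _ = ∫⁻ w, groupCDF A K (poolQuantile β (K + 1) A w) w ∂μ :=
        (lintegral_groupCDF_eq_lintegral_pooledMeasure hA hK₀.le hswap β).symm
    _ ≤ ∫⁻ w, groupCDF A K (poolQuantile (1 - α) K A w) w ∂μ :=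
        lintegral_mono fun w => groupCDF_mono A K
          (erealQuantile_pooledMeasure_succ_le hK₀ _ _ α) w

end Exchangeable

section HierData

variable {Ω 𝒵 : Type*} {N : ℕ → Ω → ℕ} {Z : ℕ → ℕ → Ω → 𝒵}

theorem groupSize_hierData {L k : ℕ} (hk : k < L) (ω : Ω) :
    groupSize (hierData L N Z ω) k = N k ω := by
  simp [groupSize, hierData, hk]

variable {K K₀ : ℕ} {A : (Fin K₀ → ℕ × (ℕ → 𝒵)) → 𝒵 → ℝ}

theorem score_hierData (hK₀ : K₀ ≤ K + 1) {k : ℕ} (hk : k < K + 1) (ω : Ω) (i : ℕ) :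
    score A (hierData (K + 1) N Z ω) k i = A (hierData K₀ N Z ω) (Z k i ω) := by
  have htrain : trainingGroups (hierData (K + 1) N Z ω) = hierData K₀ N Z ω := by
    funext j
    simp only [trainingGroups, dif_pos (show (j : ℕ) < K + 1 by omega)]
    rfl
  simp [score, hk, htrain, hierData]

theorem preimage_hierData_score_le_poolQuantile (hK₀ : K₀ ≤ K) (α : ℝ) :
    hierData (K + 1) N Z ⁻¹' {w | score A w K 0 ≤ poolQuantile (1 - α) K A w}
      = {ω | (A (hierData K₀ N Z ω) (Z K 0 ω) : EReal)
          ≤ poolThreshold α K₀ K (fun k => N k ω) fun k i => A (hierData K₀ N Z ω) (Z k i ω)} := by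
  ext ω
  simp only [mem_preimage, mem_ofPred_eq, poolQuantile, poolThreshold_eq,
    score_hierData (by omega : K₀ ≤ K + 1) K.lt_succ_self]
  rw [pooledMeasure_congr (fun k hk => groupSize_hierData (by simp at hk; omega) ω)
    fun k hk => funext fun i => score_hierData (by omega) (by simp at hk; omega) ω i]

end HierData

section HierExch

variable {Ω 𝒵 : Type*} [MeasurableSpace Ω] [MeasurableSpace 𝒵] {L : ℕ} {P : Measure Ω}
  {N : ℕ → Ω → ℕ} {Z : ℕ → ℕ → Ω → 𝒵}

theorem measurable_hierData (hN : ∀ k, Measurable (N k)) (hZ : ∀ k i, Measurable (Z k i)) :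
    Measurable (hierData L N Z) :=
  measurable_pi_lambda _ fun k => (hN k).prodMk (measurable_pi_lambda _ fun i => hZ k i)

theorem HierExch.measurePreserving_comp_perm (h : HierExch L P N Z)
    (hW : Measurable (hierData L N Z)) (σ : Equiv.Perm (Fin L)) :
    MeasurePreserving (fun w j => w (σ j)) (P.map (hierData L N Z)) (P.map (hierData L N Z)) := by
  have hσ : Measurable fun (w : Fin L → ℕ × (ℕ → 𝒵)) j => w (σ j) :=
    measurable_pi_lambda _ fun j => measurable_pi_apply (σ j)
  exact ⟨hσ, by rw [Measure.map_map hσ hW]; exact h.1 σ⟩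

theorem HierExch.measurePreserving_permuteWithin [IsFiniteMeasure P] (h : HierExch L P N Z)
    (hW : Measurable (hierData L N Z)) {k : ℕ} (hk : k < L) (m : ℕ) (σ : Equiv.Perm (Fin m)) :
    MeasurePreserving (permuteWithin k σ)
      ((P.map (hierData L N Z)).restrict {w | groupSize w k = m})
      ((P.map (hierData L N Z)).restrict {w | groupSize w k = m}) := by
  have hpre : hierData L N Z ⁻¹' {w | groupSize w k = m} = {ω | N k ω = m} := by
    ext ω
    simp [groupSize_hierData hk]
  have hperm : hierData L N (fun k' i => if k' = k then Z k' (permExt σ i) else Z k' i)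
      = permuteWithin k σ ∘ hierData L N Z := by
    funext ω j
    simp only [hierData, permuteWithin, Function.comp_apply]
    congr 1
    funext i
    split_ifs <;> rfl
  refine ⟨measurable_permuteWithin k σ, ?_⟩
  rw [Measure.restrict_map hW (measurableSet_groupSize_eq k m),
    Measure.map_map (measurable_permuteWithin k σ) hW, hpre]
  rcases eq_or_ne (P {ω | N k ω = m}) 0 with h0 | h0
  · simp [Measure.restrict_eq_zero.2 h0]
  · have hcond := congrArg (P {ω | N k ω = m} • ·) (h.2 k hk m (pos_iff_ne_zero.2 h0) σ)
    simpa [hperm, ProbabilityTheory.cond, Measure.map_smul, smul_smul,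
      ENNReal.mul_inv_cancel h0 (measure_ne_top _ _)] using hcond

end HierExch

theorem pooling_cdfs_coverage_lower_general
    {𝒳 𝒴 Ω : Type*} [MeasurableSpace 𝒳] [MeasurableSpace 𝒴] [MeasurableSpace Ω]
    (P : Measure Ω) [IsProbabilityMeasure P]
    (K K₀ : ℕ) (hK₀ : K₀ < K)
    (N : ℕ → Ω → ℕ) (Z : ℕ → ℕ → Ω → 𝒳 × 𝒴)
    (hN : ∀ k ω, 1 ≤ N k ω)
    (hNmeas : ∀ k, Measurable (N k)) (hZmeas : ∀ k i, Measurable (Z k i))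
    (hexch : HierExch (K + 1) P N Z)
    (α : ℝ) (hα₀ : 0 < α)
    (A : (Fin K₀ → ℕ × (ℕ → 𝒳 × 𝒴)) → 𝒳 × 𝒴 → ℝ)
    (hA : Measurable fun p : (Fin K₀ → ℕ × (ℕ → 𝒳 × 𝒴)) × (𝒳 × 𝒴) => A p.1 p.2) :
    ENNReal.ofReal (1 - α - (1 - α) / (((K - K₀ : ℕ) : ℝ) + 1)) ≤
      P {ω | (A (hierData K₀ N Z ω) (Z K 0 ω) : EReal)
          ≤ poolThreshold α K₀ K (fun k => N k ω)
              fun k i => A (hierData K₀ N Z ω) (Z k i ω)} := by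
  have hW : Measurable (hierData (K + 1) N Z) := measurable_hierData hNmeas hZmeas
  have : IsProbabilityMeasure (P.map (hierData (K + 1) N Z)) :=
    Measure.isProbabilityMeasure_map hW.aemeasurable
  have hsize : ∀ k ∈ Finset.Ico K₀ (K + 1),
      P.map (hierData (K + 1) N Z) {w | groupSize w k = 0} = 0 := fun k hk => by
    rw [Measure.map_apply hW (measurableSet_groupSize_eq k 0)]
    convert measure_empty (μ := P)
    ext ω
    simpa [groupSize_hierData (Finset.mem_Ico.1 hk).2] using Nat.one_le_iff_ne_zero.1 (hN k ω)
  rw [← preimage_hierData_score_le_poolQuantile hK₀.le, ← Measure.map_apply hW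
    (measurableSet_le (measurable_score hA K 0) (measurable_poolQuantile hA _ K))]
  exact coverage_lower_of_exchangeable hA hK₀ (hexch.measurePreserving_comp_perm hW)
    (hexch.measurePreserving_permuteWithin hW K.lt_succ_self) hsize hα₀.le

/-- **Proposition (Coverage of Pooling CDFs, lower bound).**
Under hierarchical exchangeability, the Pooling-CDFs prediction set, with score fitted on
the training groups `0, …, K₀-1` via the algorithm `A` and with threshold the
`(1-α)`-quantile of the pooled empirical CDF of the calibration scores, satisfies
`P(Y_test ∈ Ĉ(X_test)) ≥ 1 - α - (1-α)/(K₁+1)`. -/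
theorem pooling_cdfs_coverage_lower
    {𝒳 𝒴 Ω : Type*} [MeasurableSpace 𝒳] [MeasurableSpace 𝒴] [MeasurableSpace Ω]
    (P : Measure Ω) [IsProbabilityMeasure P]
    (K K₀ : ℕ) (hK₀ : K₀ < K)
    (N : ℕ → Ω → ℕ) (Z : ℕ → ℕ → Ω → 𝒳 × 𝒴)
    (hN : ∀ k ω, 1 ≤ N k ω)
    (hNmeas : ∀ k, Measurable (N k)) (hZmeas : ∀ k i, Measurable (Z k i))
    (hexch : HierExch (K + 1) P N Z)
    (α : ℝ) (hα₀ : 0 < α) (hα₁ : α < 1)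
    (A : (Fin K₀ → ℕ × (ℕ → 𝒳 × 𝒴)) → 𝒳 × 𝒴 → ℝ)
    (hA : Measurable fun p : (Fin K₀ → ℕ × (ℕ → 𝒳 × 𝒴)) × (𝒳 × 𝒴) => A p.1 p.2) :
    ENNReal.ofReal (1 - α - (1 - α) / (((K - K₀ : ℕ) : ℝ) + 1)) ≤
      P {ω | (A (hierData K₀ N Z ω) (Z K 0 ω) : EReal)
          ≤ poolThreshold α K₀ K (fun k => N k ω)
              fun k i => A (hierData K₀ N Z ω) (Z k i ω)} :=
  pooling_cdfs_coverage_lower_general P K K₀ hK₀ N Z hN hNmeas hZmeas hexch α hα₀ A hA
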